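/- Let n ≥ 1, let k_1, …, k_n be nonzero real numbers and m_1, …, m_n be positive real numbers. For each p set X_{2p−1} = m_p + 2i k_p and X_{2p} = m_p − 2i k_p, and for i < j define D_{k_i,m_i,k_j,m_j} = [ (4(k_i−k_j)² + (m_i−m_j)²) / (4(k_i−k_j)² + (m_i+m_j)²) ] · [ (4(k_i+k_j)² + (m_i−m_j)²) / (4(k_i+k_j)² + (m_i+m_j)²) ]. Then ∏_{1 ≤ i < j ≤ n} D_{k_i,m_i,k_j,m_j} = ( ∏_{j=1}^{n} m_j/(2i k_j) ) · ∏_{1 ≤ i < j ≤ 2n} (X_i − X_j)/(X_i + X_j). -/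
import Mathlib

open scoped BigOperators

namespace NormProductSchur

/-- The embedding `(p, b) ↦ 2p + b` of a block index and a parity into `Fin (2n)`. -/
def ee {n : ℕ} (p : Fin n) (b : Fin 2) : Fin (2*n) :=
  ⟨2*(p:ℕ) + (b:ℕ), by have := p.isLt; have := b.isLt; omega⟩

/-- The finset of ordered pairs `i < j` in `Fin N × Fin N`. -/
def P (N : ℕ) : Finset (Fin N × Fin N) := Finset.univ.filter fun x => x.1 < x.2

lemma prod_pairs {M : Type*} [CommMonoid M] {N : ℕ} (F : Fin N → Fin N → M) :
    ∏ i : Fin N, ∏ j ∈ Finset.Ioi i, F i j = ∏ x ∈ P N, F x.1 x.2 := by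
  rw [P, Finset.prod_filter, ← Finset.univ_product_univ, Finset.prod_product]
  refine Finset.prod_congr rfl fun i _ => ?_
  rw [← Finset.prod_filter]
  congr 1
  ext j
  simp [Finset.mem_Ioi]

lemma split {M : Type*} [CommMonoid M] (n : ℕ) (F : Fin (2*n) → Fin (2*n) → M) :
    ∏ x ∈ P (2*n), F x.1 x.2
      = (∏ p : Fin n, F (ee p 0) (ee p 1)) *
        ∏ y ∈ P n, (F (ee y.1 0) (ee y.2 0) * F (ee y.1 0) (ee y.2 1) *
          F (ee y.1 1) (ee y.2 0) * F (ee y.1 1) (ee y.2 1)) := by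
  classical
  have hsplit : P (2*n)
      = (P (2*n)).filter (fun x => ((x.1:ℕ))/2 = ((x.2:ℕ))/2) ∪
        (P (2*n)).filter (fun x => ¬ ((x.1:ℕ))/2 = ((x.2:ℕ))/2) :=
    (Finset.filter_union_filter_not_eq _ _).symm
  rw [hsplit, Finset.prod_union (Finset.disjoint_filter_filter_not _ _ _)]
  congr 1
  · -- same-block pairs
    refine Finset.prod_nbij' (fun x => (⟨(x.1:ℕ)/2, by have := x.1.isLt; omega⟩ : Fin n))
      (fun p => (ee p 0, ee p 1)) ?_ ?_ ?_ ?_ ?_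
    · intro a _; exact Finset.mem_univ _
    · intro p _
      simp only [Finset.mem_filter, P, Finset.mem_univ, true_and]
      refine ⟨?_, ?_⟩
      · simp [ee, Fin.lt_def]
      · simp only [ee]; omega
    · intro a ha
      simp only [Finset.mem_filter, P, Finset.mem_univ, true_and, Fin.lt_def] at ha
      obtain ⟨h1, h2⟩ := ha
      have := a.1.isLt; have := a.2.isLt
      have : (a.1 : ℕ) % 2 = 0 ∧ (a.2 : ℕ) = (a.1 : ℕ) + 1 := by omega
      ext
      · simp only [ee]; omega
      · simp only [ee]; omega
    · intro p _
      ext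
      simp [ee]
    · intro a ha
      simp only [Finset.mem_filter, P, Finset.mem_univ, true_and, Fin.lt_def] at ha
      obtain ⟨h1, h2⟩ := ha
      congr 1 <;> ext <;> simp only [ee] <;> omega
  · -- cross-block pairs
    have hrw : ∀ y ∈ P n,
        (F (ee y.1 0) (ee y.2 0) * F (ee y.1 0) (ee y.2 1) *
          F (ee y.1 1) (ee y.2 0) * F (ee y.1 1) (ee y.2 1))
        = ∏ z : Fin 2 × Fin 2, F (ee y.1 z.1) (ee y.2 z.2) := by
      intro y _
      rw [Fintype.prod_prod_type]
      rw [Fin.prod_univ_two (f := fun b => ∏ c : Fin 2, F (ee y.1 b) (ee y.2 c))]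
      rw [Fin.prod_univ_two, Fin.prod_univ_two]
      rw [mul_assoc]
    rw [Finset.prod_congr rfl hrw]
    have hP : ∏ y ∈ P n, ∏ z : Fin 2 × Fin 2, F (ee y.1 z.1) (ee y.2 z.2)
        = ∏ w ∈ (P n) ×ˢ (Finset.univ : Finset (Fin 2 × Fin 2)),
            F (ee w.1.1 w.2.1) (ee w.1.2 w.2.2) := by
      rw [Finset.prod_product]
    rw [hP]
    refine Finset.prod_nbij'
      (fun x => ((⟨(x.1:ℕ)/2, by have := x.1.isLt; omega⟩, ⟨(x.2:ℕ)/2, by have := x.2.isLt; omega⟩),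
        ((⟨(x.1:ℕ)%2, by omega⟩ : Fin 2), (⟨(x.2:ℕ)%2, by omega⟩ : Fin 2))))
      (fun w => (ee w.1.1 w.2.1, ee w.1.2 w.2.2)) ?_ ?_ ?_ ?_ ?_
    · intro a ha
      simp only [Finset.mem_filter, P, Finset.mem_univ, true_and, Fin.lt_def] at ha
      simp only [Finset.mem_product, Finset.mem_filter, P, Finset.mem_univ, true_and, Fin.lt_def]
      exact ⟨by omega, trivial⟩
    · intro w hw
      simp only [Finset.mem_product, Finset.mem_filter, P, Finset.mem_univ, true_and,
        Fin.lt_def] at hw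
      have := w.2.1.isLt; have := w.2.2.isLt
      simp only [Finset.mem_filter, P, Finset.mem_univ, true_and, Fin.lt_def, ee]
      exact ⟨by omega, by omega⟩
    · intro a _
      ext <;> simp only [ee] <;> omega
    · intro w _
      have := w.2.1.isLt; have := w.2.2.isLt
      ext <;> simp only [ee] <;> omega
    · intro a _
      congr 1 <;> [skip; skip] <;> congr 1 <;> ext <;> simp only [ee] <;> omega

lemma key (a b : ℝ) :
    ((a:ℂ) + 2*Complex.I*b) * ((a:ℂ) - 2*Complex.I*b) = ((a^2 + 4*b^2 : ℝ) : ℂ) := by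
  push_cast
  linear_combination (-4:ℂ)*(b:ℂ)^2*Complex.I_sq

lemma frac4 (A B C D : ℂ) :
    (A-C)/(A+C) * ((A-D)/(A+D)) * ((B-C)/(B+C)) * ((B-D)/(B+D))
      = ((A-C)*(B-D)) * ((A-D)*(B-C)) / (((A+C)*(B+D)) * ((A+D)*(B+C))) := by
  rw [div_mul_div_comm, div_mul_div_comm, div_mul_div_comm]
  congr 1 <;> ring

end NormProductSchur

open NormProductSchur

/-- The product of the pairwise norm factors `D_{kᵢ,mᵢ,kⱼ,mⱼ}` of the Bethe string
states equals `(∏ⱼ mⱼ/(2i kⱼ))` times the Schur-Pfaffian product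
`∏_{i<j} (Xᵢ − Xⱼ)/(Xᵢ + Xⱼ)` in the variables `X_{2p−1} = mₚ + 2i kₚ`,
`X_{2p} = mₚ − 2i kₚ`. -/
theorem norm_product_schur (n : ℕ) (hn : 1 ≤ n)
    (k m : Fin n → ℝ) (hk : ∀ p, k p ≠ 0) (hm : ∀ p, 0 < m p)
    (X : Fin (2*n) → ℂ)
    (hX1 : ∀ p : Fin n, X ⟨2*(p:ℕ), by have := p.isLt; omega⟩
        = (m p : ℂ) + 2 * Complex.I * (k p : ℂ))
    (hX2 : ∀ p : Fin n, X ⟨2*(p:ℕ)+1, by have := p.isLt; omega⟩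
        = (m p : ℂ) - 2 * Complex.I * (k p : ℂ)) :
    (∏ i : Fin n, ∏ j ∈ Finset.Ioi i,
        ((((4*(k i - k j)^2 + (m i - m j)^2) / (4*(k i - k j)^2 + (m i + m j)^2)) *
          ((4*(k i + k j)^2 + (m i - m j)^2) / (4*(k i + k j)^2 + (m i + m j)^2)) : ℝ) : ℂ))
      = (∏ j : Fin n, (m j : ℂ) / (2 * Complex.I * (k j : ℂ))) *
        ∏ i : Fin (2*n), ∏ j ∈ Finset.Ioi i, (X i - X j) / (X i + X j) := by
  have hX1' : ∀ p : Fin n, X (ee p 0) = (m p : ℂ) + 2 * Complex.I * (k p : ℂ) := by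
    intro p
    have h : ee p 0 = ⟨2*(p:ℕ), by have := p.isLt; omega⟩ := by ext; simp [ee]
    rw [h]; exact hX1 p
  have hX2' : ∀ p : Fin n, X (ee p 1) = (m p : ℂ) - 2 * Complex.I * (k p : ℂ) := by
    intro p
    have h : ee p 1 = ⟨2*(p:ℕ)+1, by have := p.isLt; omega⟩ := by ext; simp [ee]
    rw [h]; exact hX2 p
  rw [prod_pairs (fun i j => (X i - X j) / (X i + X j)), split n (fun i j => (X i - X j) / (X i + X j))]
  rw [← mul_assoc, ← Finset.prod_mul_distrib]
  have hone : ∀ p : Fin n,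
      (m p : ℂ) / (2 * Complex.I * (k p : ℂ)) *
        ((X (ee p 0) - X (ee p 1)) / (X (ee p 0) + X (ee p 1))) = 1 := by
    intro p
    rw [hX1' p, hX2' p]
    have hm' : (m p : ℂ) ≠ 0 := by exact_mod_cast (hm p).ne'
    have hk' : (k p : ℂ) ≠ 0 := by exact_mod_cast hk p
    have hI := Complex.I_ne_zero
    rw [show ((m p : ℂ) + 2*Complex.I*(k p : ℂ)) - ((m p : ℂ) - 2*Complex.I*(k p : ℂ))
        = 4*Complex.I*(k p : ℂ) from by ring,
      show ((m p : ℂ) + 2*Complex.I*(k p : ℂ)) + ((m p : ℂ) - 2*Complex.I*(k p : ℂ))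
        = 2*(m p : ℂ) from by ring,
      div_mul_div_comm, div_eq_one_iff_eq]
    · ring
    · exact mul_ne_zero (mul_ne_zero (mul_ne_zero two_ne_zero hI) hk')
        (mul_ne_zero two_ne_zero hm')
  rw [Finset.prod_congr rfl (fun p _ => hone p), Finset.prod_const_one, one_mul]
  rw [prod_pairs (fun i j =>
      ((((4*(k i - k j)^2 + (m i - m j)^2) / (4*(k i - k j)^2 + (m i + m j)^2)) *
        ((4*(k i + k j)^2 + (m i - m j)^2) / (4*(k i + k j)^2 + (m i + m j)^2)) : ℝ) : ℂ))]
  refine Finset.prod_congr rfl fun y _ => ?_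
  obtain ⟨i, j⟩ := y
  simp only
  rw [hX1' i, hX1' j, hX2' i, hX2' j]
  have h1 := key (m i - m j) (k i - k j)
  have h2 := key (m i + m j) (k i + k j)
  have h3 := key (m i - m j) (k i + k j)
  have h4 := key (m i + m j) (k i - k j)
  push_cast at h1 h2 h3 h4 ⊢
  set a := (m i : ℂ) with ha
  set b := (k i : ℂ) with hb
  set c := (m j : ℂ) with hc
  set d := (k j : ℂ) with hd
  set A := a + 2*Complex.I*b with hA
  set B := a - 2*Complex.I*b with hB
  set C := c + 2*Complex.I*d with hC
  set D := c - 2*Complex.I*d with hD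
  have hnum : (A-C)*(B-D) * ((A-D)*(B-C))
      = ((a-c)^2 + 4*(b-d)^2) * ((a-c)^2 + 4*(b+d)^2) := by
    rw [hA, hB, hC, hD]
    linear_combination (((a + 2*Complex.I*b) - (c - 2*Complex.I*d)) *
        ((a - 2*Complex.I*b) - (c + 2*Complex.I*d))) * h1 +
      ((a-c)^2 + 4*(b-d)^2) * h3
  have hden : (A+C)*(B+D) * ((A+D)*(B+C))
      = ((a+c)^2 + 4*(b+d)^2) * ((a+c)^2 + 4*(b-d)^2) := by
    rw [hA, hB, hC, hD]
    linear_combination (((a + 2*Complex.I*b) + (c - 2*Complex.I*d)) *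
        ((a - 2*Complex.I*b) + (c + 2*Complex.I*d))) * h2 +
      ((a+c)^2 + 4*(b+d)^2) * h4
  rw [frac4, hnum, hden, div_mul_div_comm]
  congr 1 <;> ring
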